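/- Let P₁ = {x ∈ ℝ^{n₁} : A⁽¹⁾x = b⁽¹⁾, B⁽¹⁾x ≤ d⁽¹⁾} and P₂ = {x ∈ ℝ^{n₂} : A⁽²⁾x = b⁽²⁾, B⁽²⁾x ≤ d⁽²⁾} be pointed polyhedra (ker(A⁽ⁱ⁾) ∩ ker(B⁽ⁱ⁾) = {0} for i = 1,2), and consider the block description of P₁ × P₂ ⊆ ℝ^{n₁+n₂} given by A⁽¹⁾x⁽¹⁾ = b⁽¹⁾, A⁽²⁾x⁽²⁾ = b⁽²⁾, B⁽¹⁾x⁽¹⁾ ≤ d⁽¹⁾, B⁽²⁾x⁽²⁾ ≤ d⁽²⁾. Then the circuits of this block description are exactly (C(A⁽¹⁾,B⁽¹⁾) × {0}) ∪ ({0} × C(A⁽²⁾,B⁽²⁾)), i.e., C(P₁ × P₂) = (C(P₁) × {0}) ∪ ({0} × C(P₂)). -/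

import Mathlib

open Matrix

noncomputable section

/-- The polyhedron `{x : Ax = b, Bx ≤ d}`. -/
def polySet {p q n : Type*} [Fintype n] (A : Matrix p n ℝ) (b : p → ℝ)
    (B : Matrix q n ℝ) (d : q → ℝ) : Set (n → ℝ) :=
  {x | A.mulVec x = b ∧ B.mulVec x ≤ d}

/-- The circuits of the linear description `Ax = b, Bx ≤ d`: nonzero kernel elements `g` of `A`
whose support of `Bg` is inclusion-minimal among nonzero kernel elements. -/
def circuits {p q n : Type*} [Fintype n] (A : Matrix p n ℝ) (B : Matrix q n ℝ) :
    Set (n → ℝ) :=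
  {g | A.mulVec g = 0 ∧ g ≠ 0 ∧
    ∀ y : n → ℝ, A.mulVec y = 0 → y ≠ 0 →
      {i | B.mulVec y i ≠ 0} ⊆ {i | B.mulVec g i ≠ 0} →
      {i | B.mulVec g i ≠ 0} ⊆ {i | B.mulVec y i ≠ 0}}

/-- A face of a polyhedron `P`: either `P` itself or the set of maximizers of a linear
functional over `P` whose supremum is finite and attained. -/
def IsFace {n : Type*} [Fintype n] (P F : Set (n → ℝ)) : Prop :=
  F = P ∨ ∃ (c : n → ℝ) (s : ℝ),
    (∀ y ∈ P, c ⬝ᵥ y ≤ s) ∧ (∃ y ∈ P, c ⬝ᵥ y = s) ∧ F = {x ∈ P | c ⬝ᵥ x = s}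

/-- The dimension of the affine span of a set. -/
def spanDim {n : Type*} [Fintype n] (S : Set (n → ℝ)) : ℕ :=
  Module.finrank ℝ (affineSpan ℝ S).direction

def IsVertex {n : Type*} [Fintype n] (P : Set (n → ℝ)) (v : n → ℝ) : Prop :=
  IsFace P {v}

def IsEdge {n : Type*} [Fintype n] (P F : Set (n → ℝ)) : Prop :=
  IsFace P F ∧ spanDim F = 1

/-- A nonzero vector lying in the direction space of the affine span of some edge of `P`. -/
def IsEdgeDirection {n : Type*} [Fintype n] (P : Set (n → ℝ)) (g : n → ℝ) : Prop :=
  g ≠ 0 ∧ ∃ F, IsEdge P F ∧ g ∈ (affineSpan ℝ F).direction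

/-- A facet: a face whose affine span has dimension `dim P - 1`. -/
def IsFacet {n : Type*} [Fintype n] (P F : Set (n → ℝ)) : Prop :=
  IsFace P F ∧ spanDim F + 1 = spanDim P

/-- A pointed set: contains no affine line. -/
def PointedSet {n : Type*} [Fintype n] (P : Set (n → ℝ)) : Prop :=
  ∀ x v : n → ℝ, (∀ t : ℝ, x + t • v ∈ P) → v = 0

/-- `Ax = b, Bx ≤ d` is an irredundant description of `P`. -/
def Irredundant {p q n : Type*} [Fintype n] (A : Matrix p n ℝ) (b : p → ℝ)
    (B : Matrix q n ℝ) (d : q → ℝ) (P : Set (n → ℝ)) : Prop :=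
  P = polySet A b B d ∧
  {x | A.mulVec x = b} = (affineSpan ℝ P : Set (n → ℝ)) ∧
  ∀ i, IsFacet P {x ∈ P | B.mulVec x i = d i}

/-- A basic solution of the system `Ax = b, Bx ≤ d`: satisfies the equalities, and the rows of
`A` together with the tight rows of `B` span the whole space. -/
def IsBasicSolution {p q n : Type*} [Fintype n] (A : Matrix p n ℝ) (b : p → ℝ)
    (B : Matrix q n ℝ) (d : q → ℝ) (g : n → ℝ) : Prop :=
  A.mulVec g = b ∧
  Submodule.span ℝ (Set.range (fun i => A i) ∪
    (fun i => B i) '' {i | B.mulVec g i = d i}) = ⊤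
/-!
The kernel of the block matrix is `ker A₁ × ker A₂`, and the support of `(B₁u, B₂v)` is the
disjoint union of the supports of `B₁u` and `B₂v`. Pointedness turns an empty support into a zero
vector. So if `(u, v)` is a circuit with `u ≠ 0`, comparing it with `(u, 0)` forces `B₂v = 0`,
hence `v = 0`; and every nonzero kernel vector whose support lies inside that of `(u, 0)` is of
the form `(y, 0)`, so the minimality of `(u, 0)` is exactly the minimality of `u`.
-/

namespace Sum

variable {α β γ : Type*}

theorem elim_ne_zero_iff [Zero γ] {f : α → γ} {g : β → γ} :
    Sum.elim f g ≠ 0 ↔ f ≠ 0 ∨ g ≠ 0 := by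
  rw [ne_eq, ← Sum.elim_zero_zero, Sum.elim_eq_iff, not_and_or]

theorem exists_elim_eq (w : α ⊕ β → γ) : ∃ f g, w = Sum.elim f g :=
  ⟨_, _, (Sum.elim_comp_inl_inr w).symm⟩

end Sum

section RowSupport

variable {p q n : Type*} [Fintype n]

def rowSupport (B : Matrix q n ℝ) (g : n → ℝ) : Set q :=
  {i | (B *ᵥ g) i ≠ 0}

theorem mem_circuits_iff {A : Matrix p n ℝ} {B : Matrix q n ℝ} {g : n → ℝ} :
    g ∈ circuits A B ↔ A *ᵥ g = 0 ∧ g ≠ 0 ∧ ∀ y, A *ᵥ y = 0 → y ≠ 0 →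
      rowSupport B y ⊆ rowSupport B g → rowSupport B g ⊆ rowSupport B y :=
  Iff.rfl

theorem eq_zero_of_rowSupport_subset_zero {A : Matrix p n ℝ} {B : Matrix q n ℝ}
    (hpointed : ∀ v, A *ᵥ v = 0 → B *ᵥ v = 0 → v = 0) {v : n → ℝ} (hA : A *ᵥ v = 0)
    (hsub : rowSupport B v ⊆ rowSupport B 0) : v = 0 := by
  refine hpointed v hA (funext fun i => not_not.1 fun hi => ?_)
  simpa [rowSupport] using hsub hi

end RowSupport

section Blocks

variable {p₁ p₂ q₁ q₂ n₁ n₂ : Type*} [Fintype n₁] [Fintype n₂]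

theorem fromBlocks_zero_mulVec_sumElim {α : Type*} [NonUnitalNonAssocSemiring α]
    (M₁ : Matrix p₁ n₁ α) (M₂ : Matrix p₂ n₂ α) (u : n₁ → α) (v : n₂ → α) :
    fromBlocks M₁ 0 0 M₂ *ᵥ Sum.elim u v = Sum.elim (M₁ *ᵥ u) (M₂ *ᵥ v) := by
  simp [fromBlocks_mulVec]

theorem fromBlocks_zero_mulVec_sumElim_eq_zero_iff {α : Type*} [NonUnitalNonAssocSemiring α]
    {M₁ : Matrix p₁ n₁ α} {M₂ : Matrix p₂ n₂ α} {u : n₁ → α} {v : n₂ → α} :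
    fromBlocks M₁ 0 0 M₂ *ᵥ Sum.elim u v = 0 ↔ M₁ *ᵥ u = 0 ∧ M₂ *ᵥ v = 0 := by
  rw [fromBlocks_zero_mulVec_sumElim, ← Sum.elim_zero_zero, Sum.elim_eq_iff]

theorem rowSupport_fromBlocks_subset_iff {B₁ : Matrix q₁ n₁ ℝ} {B₂ : Matrix q₂ n₂ ℝ}
    {u u' : n₁ → ℝ} {v v' : n₂ → ℝ} :
    rowSupport (fromBlocks B₁ 0 0 B₂) (Sum.elim u v) ⊆
        rowSupport (fromBlocks B₁ 0 0 B₂) (Sum.elim u' v') ↔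
      rowSupport B₁ u ⊆ rowSupport B₁ u' ∧ rowSupport B₂ v ⊆ rowSupport B₂ v' := by
  simp only [Set.subset_def, rowSupport, fromBlocks_zero_mulVec_sumElim, Sum.forall,
    Set.mem_ofPred_eq, Sum.elim_inl, Sum.elim_inr]

variable {A₁ : Matrix p₁ n₁ ℝ} {B₁ : Matrix q₁ n₁ ℝ} {A₂ : Matrix p₂ n₂ ℝ}
  {B₂ : Matrix q₂ n₂ ℝ}

theorem sumElim_zero_mem_circuits_fromBlocks_iff
    (h₂ : ∀ v, A₂ *ᵥ v = 0 → B₂ *ᵥ v = 0 → v = 0) {u : n₁ → ℝ} :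
    Sum.elim u 0 ∈ circuits (fromBlocks A₁ 0 0 A₂) (fromBlocks B₁ 0 0 B₂) ↔
      u ∈ circuits A₁ B₁ := by
  simp only [mem_circuits_iff, fromBlocks_zero_mulVec_sumElim_eq_zero_iff, mulVec_zero,
    and_true, Sum.elim_ne_zero_iff, ne_eq, not_true_eq_false, or_false]
  refine and_congr_right fun _ => and_congr_right fun _ => ⟨fun hmin y hAy hy hsub => ?_, ?_⟩
  · have := hmin (Sum.elim y 0) (fromBlocks_zero_mulVec_sumElim_eq_zero_iff.2 ⟨hAy, mulVec_zero _⟩)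
      (Sum.elim_ne_zero_iff.2 (.inl hy)) (rowSupport_fromBlocks_subset_iff.2 ⟨hsub, subset_rfl⟩)
    exact (rowSupport_fromBlocks_subset_iff.1 this).1
  · intro hmin w hAw hw hsub
    obtain ⟨y, v, rfl⟩ := Sum.exists_elim_eq w
    obtain ⟨hAy, hAv⟩ := fromBlocks_zero_mulVec_sumElim_eq_zero_iff.1 hAw
    obtain ⟨hsub₁, hsub₂⟩ := rowSupport_fromBlocks_subset_iff.1 hsub
    obtain rfl := eq_zero_of_rowSupport_subset_zero h₂ hAv hsub₂
    have hy : y ≠ 0 := by simpa [Sum.elim_ne_zero_iff] using hw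
    exact rowSupport_fromBlocks_subset_iff.2 ⟨hmin y hAy hy hsub₁, subset_rfl⟩

theorem zero_sumElim_mem_circuits_fromBlocks_iff
    (h₁ : ∀ u, A₁ *ᵥ u = 0 → B₁ *ᵥ u = 0 → u = 0) {v : n₂ → ℝ} :
    Sum.elim (0 : n₁ → ℝ) v ∈ circuits (fromBlocks A₁ 0 0 A₂) (fromBlocks B₁ 0 0 B₂) ↔
      v ∈ circuits A₂ B₂ := by
  simp only [mem_circuits_iff, fromBlocks_zero_mulVec_sumElim_eq_zero_iff, mulVec_zero,
    true_and, Sum.elim_ne_zero_iff, ne_eq, not_true_eq_false, false_or]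
  refine and_congr_right fun _ => and_congr_right fun _ => ⟨fun hmin y hAy hy hsub => ?_, ?_⟩
  · have := hmin (Sum.elim (0 : n₁ → ℝ) y)
      (fromBlocks_zero_mulVec_sumElim_eq_zero_iff.2 ⟨mulVec_zero _, hAy⟩)
      (Sum.elim_ne_zero_iff.2 (.inr hy)) (rowSupport_fromBlocks_subset_iff.2 ⟨subset_rfl, hsub⟩)
    exact (rowSupport_fromBlocks_subset_iff.1 this).2
  · intro hmin w hAw hw hsub
    obtain ⟨u, y, rfl⟩ := Sum.exists_elim_eq w
    obtain ⟨hAu, hAy⟩ := fromBlocks_zero_mulVec_sumElim_eq_zero_iff.1 hAw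
    obtain ⟨hsub₁, hsub₂⟩ := rowSupport_fromBlocks_subset_iff.1 hsub
    obtain rfl := eq_zero_of_rowSupport_subset_zero h₁ hAu hsub₁
    have hy : y ≠ 0 := by simpa [Sum.elim_ne_zero_iff] using hw
    exact rowSupport_fromBlocks_subset_iff.2 ⟨subset_rfl, hmin y hAy hy hsub₂⟩

theorem eq_zero_or_eq_zero_of_sumElim_mem_circuits_fromBlocks
    (h₂ : ∀ v, A₂ *ᵥ v = 0 → B₂ *ᵥ v = 0 → v = 0) {u : n₁ → ℝ} {v : n₂ → ℝ}
    (hz : Sum.elim u v ∈ circuits (fromBlocks A₁ 0 0 A₂) (fromBlocks B₁ 0 0 B₂)) :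
    u = 0 ∨ v = 0 := by
  obtain ⟨hA, -, hmin⟩ := mem_circuits_iff.1 hz
  obtain ⟨hAu, hAv⟩ := fromBlocks_zero_mulVec_sumElim_eq_zero_iff.1 hA
  refine or_iff_not_imp_left.2 fun hu => ?_
  have hsub := hmin (Sum.elim u 0)
    (fromBlocks_zero_mulVec_sumElim_eq_zero_iff.2 ⟨hAu, mulVec_zero _⟩)
    (Sum.elim_ne_zero_iff.2 (.inl hu))
    (rowSupport_fromBlocks_subset_iff.2 ⟨subset_rfl, by simp [rowSupport]⟩)
  exact eq_zero_of_rowSupport_subset_zero h₂ hAv (rowSupport_fromBlocks_subset_iff.1 hsub).2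

theorem sumElim_mem_circuits_fromBlocks_iff
    (h₁ : ∀ u, A₁ *ᵥ u = 0 → B₁ *ᵥ u = 0 → u = 0)
    (h₂ : ∀ v, A₂ *ᵥ v = 0 → B₂ *ᵥ v = 0 → v = 0) {u : n₁ → ℝ} {v : n₂ → ℝ} :
    Sum.elim u v ∈ circuits (fromBlocks A₁ 0 0 A₂) (fromBlocks B₁ 0 0 B₂) ↔
      u ∈ circuits A₁ B₁ ∧ v = 0 ∨ u = 0 ∧ v ∈ circuits A₂ B₂ := by
  constructor
  · intro hz
    rcases eq_zero_or_eq_zero_of_sumElim_mem_circuits_fromBlocks h₂ hz with rfl | rfl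
    · exact .inr ⟨rfl, (zero_sumElim_mem_circuits_fromBlocks_iff h₁).1 hz⟩
    · exact .inl ⟨(sumElim_zero_mem_circuits_fromBlocks_iff h₂).1 hz, rfl⟩
  · rintro (⟨hu, rfl⟩ | ⟨rfl, hv⟩)
    · exact (sumElim_zero_mem_circuits_fromBlocks_iff h₂).2 hu
    · exact (zero_sumElim_mem_circuits_fromBlocks_iff h₁).2 hv

end Blocks

theorem stmt_4_general {p₁ q₁ n₁ p₂ q₂ n₂ : ℕ}
    (A₁ : Matrix (Fin p₁) (Fin n₁) ℝ)
    (B₁ : Matrix (Fin q₁) (Fin n₁) ℝ)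
    (A₂ : Matrix (Fin p₂) (Fin n₂) ℝ)
    (B₂ : Matrix (Fin q₂) (Fin n₂) ℝ)
    (h₁ : ∀ v : Fin n₁ → ℝ, A₁.mulVec v = 0 → B₁.mulVec v = 0 → v = 0)
    (h₂ : ∀ v : Fin n₂ → ℝ, A₂.mulVec v = 0 → B₂.mulVec v = 0 → v = 0) :
    circuits (Matrix.fromBlocks A₁ 0 0 A₂) (Matrix.fromBlocks B₁ 0 0 B₂) =
      {z : Fin n₁ ⊕ Fin n₂ → ℝ |
        (∃ g ∈ circuits A₁ B₁, z = Sum.elim g (0 : Fin n₂ → ℝ)) ∨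
        (∃ g ∈ circuits A₂ B₂, z = Sum.elim (0 : Fin n₁ → ℝ) g)} := by
  ext z
  obtain ⟨u, v, rfl⟩ := Sum.exists_elim_eq z
  simp [sumElim_mem_circuits_fromBlocks_iff h₁ h₂, Sum.elim_eq_iff, and_comm]

/-- For pointed polyhedra `P₁`, `P₂`, the circuits of the block description of
`P₁ × P₂` are exactly `(C(P₁) × {0}) ∪ ({0} × C(P₂))`. -/
theorem stmt_4 {p₁ q₁ n₁ p₂ q₂ n₂ : ℕ}
    (A₁ : Matrix (Fin p₁) (Fin n₁) ℝ) (b₁ : Fin p₁ → ℝ)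
    (B₁ : Matrix (Fin q₁) (Fin n₁) ℝ) (d₁ : Fin q₁ → ℝ)
    (A₂ : Matrix (Fin p₂) (Fin n₂) ℝ) (b₂ : Fin p₂ → ℝ)
    (B₂ : Matrix (Fin q₂) (Fin n₂) ℝ) (d₂ : Fin q₂ → ℝ)
    (h₁ : ∀ v : Fin n₁ → ℝ, A₁.mulVec v = 0 → B₁.mulVec v = 0 → v = 0)
    (h₂ : ∀ v : Fin n₂ → ℝ, A₂.mulVec v = 0 → B₂.mulVec v = 0 → v = 0) :
    circuits (Matrix.fromBlocks A₁ 0 0 A₂) (Matrix.fromBlocks B₁ 0 0 B₂) =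
      {z : Fin n₁ ⊕ Fin n₂ → ℝ |
        (∃ g ∈ circuits A₁ B₁, z = Sum.elim g (0 : Fin n₂ → ℝ)) ∨
        (∃ g ∈ circuits A₂ B₂, z = Sum.elim (0 : Fin n₁ → ℝ) g)} :=
  stmt_4_general A₁ B₁ A₂ B₂ h₁ h₂
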